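/- arXiv:2003.05636 — 4 statements merged into one kernel-verified Lean document; each statement's English description precedes it below -/
import Mathlib

section
/- Let X be a measurable space, μ_s and μ_t probability measures on X, and f_s, f_t : X → Bool measurable labeling functions for the source and target domains. Let H be a set of measurable hypotheses η : X → Bool such that for all η, η' ∈ H the disagreement set {x | η x ≠ η' x} is measurable. Define the source risk ε_s(η) = μ_s {x | η x ≠ f_s x}, the target risk ε_t(η) = μ_t {x | η x ≠ f_t x}, and the divergence d_H(μ_s, μ_t) = sup over pairs η, η' ∈ H of |μ_s {x | η x ≠ η' x} − μ_t {x | η x ≠ η' x}| (taken in ℝ with measures evaluated as real numbers). Then for every η ∈ H and every η* ∈ H, the target risk satisfies ε_t(η) ≤ ε_s(η) + d_H(μ_s, μ_t) + ε_s(η*) + ε_t(η*). -/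
open MeasureTheory

/-! Disagreement with respect to a finite measure satisfies the triangle inequality. Passing through
`η*` on the target domain, `ε_t(η) ≤ μ_t(η ≠ η*) + ε_t(η*)`; the divergence moves `μ_t(η ≠ η*)` to
`μ_s(η ≠ η*)` at cost `d_H`, and passing through `f_s` gives `μ_s(η ≠ η*) ≤ ε_s(η) + ε_s(η*)`. -/

namespace MeasureTheory

variable {X β : Type*} [MeasurableSpace X]

lemma measureReal_setOf_ne_le_add (μ : Measure X) [IsFiniteMeasure μ] (f g h : X → β) :
    μ.real {x | f x ≠ h x} ≤ μ.real {x | f x ≠ g x} + μ.real {x | g x ≠ h x} := by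
  have hsub : {x | f x ≠ h x} ⊆ {x | f x ≠ g x} ∪ {x | g x ≠ h x} := fun x hfh => by
    by_cases hfg : f x = g x
    exacts [Or.inr (show g x ≠ h x from hfg ▸ hfh), Or.inl hfg]
  exact (measureReal_mono hsub).trans (measureReal_union_le _ _)

lemma abs_measureReal_sub_le_one (μ ν : Measure X) [IsProbabilityMeasure μ]
    [IsProbabilityMeasure ν] (s : Set X) : |μ.real s - ν.real s| ≤ 1 :=
  abs_sub_le_iff.2
    ⟨by linarith [measureReal_le_one (μ := μ) (s := s), measureReal_nonneg (μ := ν) (s := s)],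
      by linarith [measureReal_le_one (μ := ν) (s := s), measureReal_nonneg (μ := μ) (s := s)]⟩

end MeasureTheory

theorem domain_adaptation_generalization_bound_general
    {X : Type*} [MeasurableSpace X]
    (μs μt : Measure X) [IsProbabilityMeasure μs] [IsProbabilityMeasure μt]
    (fs ft : X → Bool)
    (H : Set (X → Bool))
    (εs εt : (X → Bool) → ℝ)
    (hεs : ∀ η, εs η = (μs {x | η x ≠ fs x}).toReal)
    (hεt : ∀ η, εt η = (μt {x | η x ≠ ft x}).toReal)
    (dH : ℝ)
    (hdH : dH = sSup {r : ℝ | ∃ η ∈ H, ∃ η' ∈ H,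
      r = |(μs {x | η x ≠ η' x}).toReal - (μt {x | η x ≠ η' x}).toReal|}) :
    ∀ η ∈ H, ∀ ηstar ∈ H,
      εt η ≤ εs η + dH + (εs ηstar + εt ηstar) := by
  intro η hη ηstar hηstar
  simp only [hεs, hεt, ← measureReal_def] at hdH ⊢
  have hdiv : |μs.real {x | η x ≠ ηstar x} - μt.real {x | η x ≠ ηstar x}| ≤ dH := by
    refine hdH ▸ le_csSup ⟨1, ?_⟩ ⟨η, hη, ηstar, hηstar, rfl⟩
    rintro r ⟨a, -, b, -, rfl⟩
    exact abs_measureReal_sub_le_one μs μt _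
  calc μt.real {x | η x ≠ ft x}
      ≤ μt.real {x | η x ≠ ηstar x} + μt.real {x | ηstar x ≠ ft x} :=
        measureReal_setOf_ne_le_add μt η ηstar ft
    _ ≤ μs.real {x | η x ≠ ηstar x} + dH + μt.real {x | ηstar x ≠ ft x} := by
        linarith [neg_abs_le (μs.real {x | η x ≠ ηstar x} - μt.real {x | η x ≠ ηstar x})]
    _ ≤ _ := by
        have hs := measureReal_setOf_ne_le_add μs η fs ηstar
        simp only [ne_comm (a := fs _)] at hs
        linarith

/-- Generalization bound of domain adaptation: for any hypothesis `η` in the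
hypothesis class `H` and any reference hypothesis `η*` in `H`, the target risk
of `η` is bounded by its source risk, plus the `H`-divergence between the
source and target distributions, plus the joint risk of `η*` on both domains. -/
theorem domain_adaptation_generalization_bound
    {X : Type*} [MeasurableSpace X]
    (μs μt : Measure X) [IsProbabilityMeasure μs] [IsProbabilityMeasure μt]
    (fs ft : X → Bool) (hfs : Measurable fs) (hft : Measurable ft)
    (H : Set (X → Bool)) (hH : ∀ η ∈ H, Measurable η)
    (hHpair : ∀ η ∈ H, ∀ η' ∈ H, MeasurableSet {x | η x ≠ η' x})
    (εs εt : (X → Bool) → ℝ)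
    (hεs : ∀ η, εs η = (μs {x | η x ≠ fs x}).toReal)
    (hεt : ∀ η, εt η = (μt {x | η x ≠ ft x}).toReal)
    (dH : ℝ)
    (hdH : dH = sSup {r : ℝ | ∃ η ∈ H, ∃ η' ∈ H,
      r = |(μs {x | η x ≠ η' x}).toReal - (μt {x | η x ≠ η' x}).toReal|}) :
    ∀ η ∈ H, ∀ ηstar ∈ H,
      εt η ≤ εs η + dH + (εs ηstar + εt ηstar) :=
  domain_adaptation_generalization_bound_general μs μt fs ft H εs εt hεs hεt dH hdH
end

section
/- Let E = EuclideanSpace ℝ (Fin p), let K be a positive natural number, c : Fin K → E class centers, and k : Fin K. Define B_k : E → ℝ by B_k(x) = ‖x − (1/K) Σ_l (Function.update c k x) l‖², i.e., the k-th between-class term ‖c_k − c̄‖² viewed as a function of the k-th class center, where the global center c̄ = (1/K) Σ_l c l also depends on that center. Then B_k is differentiable at c k and its gradient at c k equals (2 · (1 − 1/K)) • (c k − (1/K) Σ_l c l). -/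
/-! The class center `x` enters the global center with weight `1/K`, so the between-class term is
`‖(1 - 1/K) • x - w‖²` with `w` independent of `x`, whose gradient is `2(1 - 1/K)` times the
vector inside the norm. -/

theorem sub_smul_sum_update {R M ι : Type*} [Ring R] [AddCommGroup M] [Module R M]
    [Fintype ι] [DecidableEq ι] (t : R) (c : ι → M) (k : ι) (x : M) :
    x - t • ∑ l, Function.update c k x l = (1 - t) • x - t • ∑ l ∈ Finset.univ.erase k, c l := by
  rw [Finset.sum_update_of_mem (Finset.mem_univ k), Finset.sdiff_singleton_eq_erase, smul_add,
    sub_smul, one_smul, sub_sub]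

theorem hasGradientAt_norm_smul_sub_sq {F : Type*} [NormedAddCommGroup F] [InnerProductSpace ℝ F]
    [CompleteSpace F] (a : ℝ) (v x : F) :
    HasGradientAt (fun y => ‖a • y - v‖ ^ 2) ((2 * a) • (a • x - v)) x := by
  have haffine : HasFDerivAt (fun y => a • y - v) (a • ContinuousLinearMap.id ℝ F) x :=
    ((hasFDerivAt_id x).const_smul a).sub_const v
  rw [hasGradientAt_iff_hasFDerivAt]
  refine haffine.norm_sq.congr_fderiv (ContinuousLinearMap.ext fun y => ?_)
  simp only [map_sub, map_smul, ContinuousLinearMap.comp_smulₛₗ, Real.ringHom_apply,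
    ContinuousLinearMap.comp_id, smul_apply, sub_apply,
    coe_innerSL_apply, smul_eq_mul, nsmul_eq_mul, Nat.cast_ofNat,
    InnerProductSpace.toDual_apply_apply]
  ring

theorem gradient_between_class_term_wrt_center_general
    {p K : ℕ}
    (c : Fin K → EuclideanSpace ℝ (Fin p))
    (k : Fin K) :
    HasGradientAt
      (fun x : EuclideanSpace ℝ (Fin p) =>
        ‖x - (K : ℝ)⁻¹ • ∑ l : Fin K, (Function.update c k x) l‖ ^ 2)
      ((2 * (1 - 1 / (K : ℝ))) • (c k - (K : ℝ)⁻¹ • ∑ l : Fin K, c l))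
      (c k) := by
  classical
  have hcenter : c k - (K : ℝ)⁻¹ • ∑ l, c l
      = (1 - (K : ℝ)⁻¹) • c k - (K : ℝ)⁻¹ • ∑ l ∈ Finset.univ.erase k, c l := by
    simpa using sub_smul_sum_update (K : ℝ)⁻¹ c k (c k)
  simp only [sub_smul_sum_update, hcenter, one_div]
  exact hasGradientAt_norm_smul_sub_sq _ _ _

/-- The gradient of the `k`-th between-class term `‖c_k − c̄‖²`, viewed as a
function of the `k`-th class center (through which the global center `c̄` also
varies), is `2(1 − 1/K)(c_k − (1/K) Σ_l c_l)`. -/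
theorem gradient_between_class_term_wrt_center
    {p K : ℕ} (hK : 0 < K)
    (c : Fin K → EuclideanSpace ℝ (Fin p))
    (k : Fin K) :
    HasGradientAt
      (fun x : EuclideanSpace ℝ (Fin p) =>
        ‖x - (K : ℝ)⁻¹ • ∑ l : Fin K, (Function.update c k x) l‖ ^ 2)
      ((2 * (1 - 1 / (K : ℝ))) • (c k - (K : ℝ)⁻¹ • ∑ l : Fin K, c l))
      (c k) :=
  gradient_between_class_term_wrt_center_general c k
end

section
/- Let E = EuclideanSpace ℝ (Fin p), let K be a positive natural number, c : Fin K → E class centers, and k : Fin K. Define B : E → ℝ by B(x) = Σ_l ‖(Function.update c k x) l − (1/K) Σ_i (Function.update c k x) i‖², i.e., the full between-class trace tr(S_b) = Σ_l ‖c_l − c̄‖² viewed as a function of the k-th class center, where the global center c̄ depends on all centers. Then B is differentiable at c k and its gradient at c k equals 2 • (c k − (1/K) Σ_l c l); in particular, the contributions of the cross terms through the global center cancel because Σ_l (c l − c̄) = 0. -/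
/-!
Moving the `k`-th center to `x` makes every deviation from the global center affine in `x`:
it becomes `w l + a l • (x - c k)` with `w l = c l - c̄` and `a l = δ_{lk} - 1/K`. Hence the
gradient at `c k` is `∑ l, (2 * a l) • w l = 2 • (w k - (1/K) • ∑ l, w l)`, and the deviations
`w l` sum to zero.
-/

theorem HasGradientAt.fun_sum {F ι : Type*} [NormedAddCommGroup F] [InnerProductSpace ℝ F]
    [CompleteSpace F] {s : Finset ι} {f : ι → F → ℝ} {f' : ι → F} {x : F}
    (h : ∀ i ∈ s, HasGradientAt (f i) (f' i) x) :
    HasGradientAt (fun y => ∑ i ∈ s, f i y) (∑ i ∈ s, f' i) x := by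
  simp only [hasGradientAt_iff_hasFDerivAt, map_sum] at h ⊢
  exact HasFDerivAt.fun_sum h

theorem hasGradientAt_norm_sq_add_smul_sub {F : Type*} [NormedAddCommGroup F]
    [InnerProductSpace ℝ F] [CompleteSpace F] (w x₀ : F) (a : ℝ) :
    HasGradientAt (fun x => ‖w + a • (x - x₀)‖ ^ 2) ((2 * a) • w) x₀ := by
  have h : HasFDerivAt (fun x => w + a • (x - x₀)) (a • ContinuousLinearMap.id ℝ F) x₀ :=
    (((hasFDerivAt_id x₀).sub_const x₀).const_smul a).const_add w
  rw [hasGradientAt_iff_hasFDerivAt]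
  refine h.norm_sq.congr_fderiv ?_
  ext t
  simp
  ring

theorem Function.update_sub_smul_sum_eq {R V ι : Type*} [CommRing R] [AddCommGroup V]
    [Module R V] [Fintype ι] [DecidableEq ι] (c : ι → V) (k : ι) (x : V) (r : R) (l : ι) :
    Function.update c k x l - r • ∑ i, Function.update c k x i
      = (c l - r • ∑ i, c i) + ((if l = k then 1 else 0) - r) • (x - c k) := by
  rw [Finset.sum_update_of_mem (Finset.mem_univ k),
    Finset.sum_sdiff_eq_sub (Finset.subset_univ _), Finset.sum_singleton]
  rcases eq_or_ne l k with rfl | hl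
  · simp only [Function.update_self, if_true]
    module
  · simp only [Function.update_of_ne hl, hl, if_false]
    module

theorem sum_sub_inv_card_smul_sum {𝕜 V ι : Type*} [Field 𝕜] [CharZero 𝕜] [AddCommGroup V]
    [Module 𝕜 V] [Fintype ι] [Nonempty ι] (c : ι → V) :
    ∑ l, (c l - (Fintype.card ι : 𝕜)⁻¹ • ∑ i, c i) = 0 := by
  rw [Finset.sum_sub_distrib, Finset.sum_const, Finset.card_univ, ← Nat.cast_smul_eq_nsmul 𝕜,
    smul_smul, mul_inv_cancel₀ (Nat.cast_ne_zero.mpr Fintype.card_ne_zero), one_smul, sub_self]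

theorem gradient_between_class_trace_wrt_center_general
    {p K : ℕ}
    (c : Fin K → EuclideanSpace ℝ (Fin p))
    (k : Fin K) :
    HasGradientAt
      (fun x : EuclideanSpace ℝ (Fin p) =>
        ∑ l : Fin K, ‖(Function.update c k x) l
          - (K : ℝ)⁻¹ • ∑ i : Fin K, (Function.update c k x) i‖ ^ 2)
      ((2 : ℝ) • (c k - (K : ℝ)⁻¹ • ∑ l : Fin K, c l))
      (c k) := by
  have : Nonempty (Fin K) := ⟨k⟩
  set w : Fin K → EuclideanSpace ℝ (Fin p) := fun l => c l - (K : ℝ)⁻¹ • ∑ i, c i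
  have hw : ∑ l, w l = 0 := by
    simpa only [Fintype.card_fin] using sum_sub_inv_card_smul_sum (𝕜 := ℝ) c
  have hgrad : ∑ l, (2 * ((if l = k then 1 else 0) - (K : ℝ)⁻¹)) • w l = (2 : ℝ) • w k := by
    simp_rw [mul_smul, ← Finset.smul_sum, sub_smul, Finset.sum_sub_distrib, ite_smul, one_smul,
      zero_smul, Finset.sum_ite_eq', Finset.mem_univ, if_true, ← Finset.smul_sum, hw, smul_zero,
      sub_zero]
  simp_rw [Function.update_sub_smul_sum_eq]
  convert HasGradientAt.fun_sum fun l (_ : l ∈ Finset.univ) =>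
    hasGradientAt_norm_sq_add_smul_sub (w l) (c k) ((if l = k then 1 else 0) - (K : ℝ)⁻¹)
  exact hgrad.symm

/-- The gradient of the full between-class trace `tr(S_b) = Σ_l ‖c_l − c̄‖²`,
viewed as a function of the `k`-th class center (through which the global
center `c̄` also varies), is `2 (c_k − (1/K) Σ_l c_l)`: the cross-term
contributions through the global center cancel since `Σ_l (c_l − c̄) = 0`. -/
theorem gradient_between_class_trace_wrt_center
    {p K : ℕ} (hK : 0 < K)
    (c : Fin K → EuclideanSpace ℝ (Fin p))
    (k : Fin K) :
    HasGradientAt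
      (fun x : EuclideanSpace ℝ (Fin p) =>
        ∑ l : Fin K, ‖(Function.update c k x) l
          - (K : ℝ)⁻¹ • ∑ i : Fin K, (Function.update c k x) i‖ ^ 2)
      ((2 : ℝ) • (c k - (K : ℝ)⁻¹ • ∑ l : Fin K, c l))
      (c k) :=
  gradient_between_class_trace_wrt_center_general c k
end

section
/- Let E = EuclideanSpace ℝ (Fin p), let h : Fin m → E be feature vectors, y : Fin m → Fin K class labels (K a positive natural number), c : Fin K → E class centers, and k : Fin K. Define W : E → ℝ by W(x) = Σ_j ‖h j − (Function.update c k x) (y j)‖² and B : E → ℝ by B(x) = Σ_l ‖(Function.update c k x) l − (1/K) Σ_i (Function.update c k x) i‖², and assume B(c k) ≠ 0. Then the trace-ratio Fisher loss F(x) = W(x)/B(x), viewed as a function of the k-th class center, is differentiable at c k with gradient equal to (1 / B(c k)) • (Σ_j (if y j = k then (2 : ℝ) else 0) • (c k − h j)) − (2 · W(c k) / (B(c k))²) • (c k − (1/K) Σ_l c l). -/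
/-!
By the quotient rule it suffices to know the gradients of the two traces in the `k`-th center.
In the within-class trace only the summands with `y j = k` depend on it, each contributing
`2 (x - h j)`. For the between-class trace, the identity
`∑ l, ‖v l - K⁻¹ • ∑ i, v i‖² = ∑ l, ‖v l‖² - K⁻¹ ‖∑ i, v i‖²` gives the gradient
`2 x - 2 K⁻¹ • ∑ i, v i`, twice the offset of the center from the global mean.
-/

open InnerProductSpace

section RCLike

variable {𝕜 F ι : Type*} [RCLike 𝕜] [NormedAddCommGroup F] [InnerProductSpace 𝕜 F]
  [CompleteSpace F]

theorem HasGradientAt.sum {s : Finset ι} {f : ι → F → 𝕜} {f' : ι → F} {x : F}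
    (hf : ∀ i ∈ s, HasGradientAt (f i) (f' i) x) :
    HasGradientAt (fun y => ∑ i ∈ s, f i y) (∑ i ∈ s, f' i) x := by
  rw [hasGradientAt_iff_hasFDerivAt, map_sum]
  exact HasFDerivAt.fun_sum hf

end RCLike

variable {F : Type*} [NormedAddCommGroup F] [InnerProductSpace ℝ F]

theorem sum_norm_sub_card_inv_smul_sum_sq {ι : Type*} [Fintype ι] (v : ι → F) :
    ∑ l, ‖v l - (Fintype.card ι : ℝ)⁻¹ • ∑ i, v i‖ ^ 2
      = ∑ l, ‖v l‖ ^ 2 - (Fintype.card ι : ℝ)⁻¹ * ‖∑ i, v i‖ ^ 2 := by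
  have hn : (Fintype.card ι : ℝ) * (Fintype.card ι : ℝ)⁻¹ ^ 2 = (Fintype.card ι : ℝ)⁻¹ := by
    rcases eq_or_ne (Fintype.card ι : ℝ) 0 with h | h
    · simp [h]
    · field_simp
  simp only [norm_sub_sq_real, Finset.sum_add_distrib, Finset.sum_sub_distrib,
    real_inner_smul_right, ← Finset.mul_sum, ← sum_inner, real_inner_self_eq_norm_sq,
    Finset.sum_const, Finset.card_univ, nsmul_eq_mul, norm_smul, mul_pow, Real.norm_eq_abs,
    sq_abs]
  linear_combination ‖∑ i, v i‖ ^ 2 * hn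

variable [CompleteSpace F]

section CalculusRules

variable {f g : F → ℝ} {f' g' x : F}

theorem HasGradientAt.sub (hf : HasGradientAt f f' x) (hg : HasGradientAt g g' x) :
    HasGradientAt (fun y => f y - g y) (f' - g') x := by
  rw [hasGradientAt_iff_hasFDerivAt, map_sub]
  exact HasFDerivAt.sub hf hg

theorem HasGradientAt.const_mul (a : ℝ) (hf : HasGradientAt f f' x) :
    HasGradientAt (fun y => a * f y) (a • f') x := by
  rw [hasGradientAt_iff_hasFDerivAt, map_smul]
  exact HasFDerivAt.const_mul hf a

theorem HasGradientAt.div (hf : HasGradientAt f f' x) (hg : HasGradientAt g g' x)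
    (hx : g x ≠ 0) :
    HasGradientAt (fun y => f y / g y) ((g x)⁻¹ • f' - (f x / g x ^ 2) • g') x := by
  rw [hasGradientAt_iff_hasFDerivAt] at hf hg ⊢
  have hinv := (hasDerivAt_inv hx).comp_hasFDerivAt x hg
  refine (hf.mul hinv).congr_fderiv ?_
  ext v
  simp only [neg_smul, smul_neg, Function.comp_apply, add_apply, neg_apply, smul_apply,
    toDual_apply_apply, smul_eq_mul, div_eq_mul_inv, map_sub, map_smul, sub_apply]
  ring

end CalculusRules

theorem hasGradientAt_norm_sub_sq (a x : F) :
    HasGradientAt (fun y => ‖y - a‖ ^ 2) ((2 : ℝ) • (x - a)) x := by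
  rw [hasGradientAt_iff_hasFDerivAt]
  refine ((hasFDerivAt_id x).sub_const a).norm_sq.congr_fderiv ?_
  ext v
  simp

variable {ι : Type*} [DecidableEq ι]

theorem hasGradientAt_sum_norm_sub_update_sq {κ : Type*} [Fintype κ]
    (h : κ → F) (y : κ → ι) (c : ι → F) (k : ι) (x : F) :
    HasGradientAt (fun z => ∑ j, ‖h j - Function.update c k z (y j)‖ ^ 2)
      (∑ j, (if y j = k then (2 : ℝ) else 0) • (x - h j)) x := by
  refine HasGradientAt.sum fun j _ => ?_
  by_cases hj : y j = k
  · simp only [hj, Function.update_self, if_true, norm_sub_rev (h j)]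
    exact hasGradientAt_norm_sub_sq (h j) x
  · simp only [Function.update_of_ne hj, if_neg hj, zero_smul]
    exact hasGradientAt_const x _

theorem hasGradientAt_sum_norm_update_sub_mean_sq [Fintype ι] (c : ι → F) (k : ι) (x : F) :
    HasGradientAt
      (fun z => ∑ l, ‖Function.update c k z l
        - (Fintype.card ι : ℝ)⁻¹ • ∑ i, Function.update c k z i‖ ^ 2)
      ((2 : ℝ) • (x - (Fintype.card ι : ℝ)⁻¹ • ∑ i, Function.update c k x i)) x := by
  set s := ∑ i ∈ Finset.univ \ {k}, c i
  have hsum (z : F) : ∑ i, Function.update c k z i = z - -s := by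
    rw [Finset.sum_update_of_mem (Finset.mem_univ k), sub_neg_eq_add]
  have hsq : HasGradientAt (fun z => ∑ l, ‖Function.update c k z l‖ ^ 2) ((2 : ℝ) • x) x := by
    simpa using hasGradientAt_sum_norm_sub_update_sq 0 id c k x
  have htotal : HasGradientAt (fun z => ‖∑ i, Function.update c k z i‖ ^ 2)
      ((2 : ℝ) • (x - -s)) x := by
    simpa only [hsum] using hasGradientAt_norm_sub_sq (-s) x
  simp only [sum_norm_sub_card_inv_smul_sum_sq]
  convert hsq.sub (htotal.const_mul _) using 1
  rw [hsum]
  module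

theorem gradient_fisher_TR_wrt_center_general
    {p m K : ℕ}
    (h : Fin m → EuclideanSpace ℝ (Fin p))
    (y : Fin m → Fin K)
    (c : Fin K → EuclideanSpace ℝ (Fin p))
    (k : Fin K)
    (W B : EuclideanSpace ℝ (Fin p) → ℝ)
    (hW : ∀ x, W x = ∑ j : Fin m, ‖h j - (Function.update c k x) (y j)‖ ^ 2)
    (hB : ∀ x, B x = ∑ l : Fin K, ‖(Function.update c k x) l
      - (K : ℝ)⁻¹ • ∑ i : Fin K, (Function.update c k x) i‖ ^ 2)
    (hB0 : B (c k) ≠ 0) :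
    HasGradientAt
      (fun x : EuclideanSpace ℝ (Fin p) => W x / B x)
      ((1 / B (c k)) • (∑ j : Fin m, (if y j = k then (2 : ℝ) else 0) • (c k - h j))
        - (2 * W (c k) / (B (c k)) ^ 2) • (c k - (K : ℝ)⁻¹ • ∑ l : Fin K, c l))
      (c k) := by
  have hW' : HasGradientAt W (∑ j, (if y j = k then (2 : ℝ) else 0) • (c k - h j)) (c k) := by
    rw [funext hW]
    exact hasGradientAt_sum_norm_sub_update_sq h y c k (c k)
  have hB' : HasGradientAt B ((2 : ℝ) • (c k - (K : ℝ)⁻¹ • ∑ l, c l)) (c k) := by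
    rw [funext hB]
    simpa using hasGradientAt_sum_norm_update_sub_mean_sq c k (c k)
  convert hW'.div hB' hB0 using 1
  module

/-- The gradient of the trace-ratio Fisher loss `tr(S_w)/tr(S_b)`, viewed as a
function of the `k`-th class center, obtained by the quotient rule. -/
theorem gradient_fisher_TR_wrt_center
    {p m K : ℕ} (hK : 0 < K)
    (h : Fin m → EuclideanSpace ℝ (Fin p))
    (y : Fin m → Fin K)
    (c : Fin K → EuclideanSpace ℝ (Fin p))
    (k : Fin K)
    (W B : EuclideanSpace ℝ (Fin p) → ℝ)
    (hW : ∀ x, W x = ∑ j : Fin m, ‖h j - (Function.update c k x) (y j)‖ ^ 2)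
    (hB : ∀ x, B x = ∑ l : Fin K, ‖(Function.update c k x) l
      - (K : ℝ)⁻¹ • ∑ i : Fin K, (Function.update c k x) i‖ ^ 2)
    (hB0 : B (c k) ≠ 0) :
    HasGradientAt
      (fun x : EuclideanSpace ℝ (Fin p) => W x / B x)
      ((1 / B (c k)) • (∑ j : Fin m, (if y j = k then (2 : ℝ) else 0) • (c k - h j))
        - (2 * W (c k) / (B (c k)) ^ 2) • (c k - (K : ℝ)⁻¹ • ∑ l : Fin K, c l))
      (c k) :=
  gradient_fisher_TR_wrt_center_general h y c k W B hW hB hB0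
end
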